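/- For purifications |ψ₀⟩ and |ψ₁⟩ of density matrices ρ₀ and ρ₁ on H_A ⊗ H_R, the trace norm of the partial trace over A of the outer product satisfies ‖Tr_A(|ψ₀⟩⟨ψ₁|)‖₁ = F(ρ₀,ρ₁). -/

import Mathlib

open Matrix ComplexOrder
open scoped Matrix.Norms.L2Operator Kronecker

noncomputable section

variable {m : Type*} [Fintype m] [DecidableEq m]

/-- The square root of a positive semidefinite matrix, as `Matrix.PosSemidef.sqrt` was
defined in Mathlib of December 2024 (since removed). -/
def Matrix.PosSemidef.sqrt {n : Type*} [Fintype n] [DecidableEq n] {𝕜 : Type*} [RCLike 𝕜]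
    {A : Matrix n n 𝕜} (hA : A.PosSemidef) : Matrix n n 𝕜 :=
  hA.1.eigenvectorUnitary.1 * diagonal ((↑) ∘ (√·) ∘ hA.1.eigenvalues) *
  (star hA.1.eigenvectorUnitary : Matrix n n 𝕜)

/-- A density matrix: positive semidefinite with unit trace. -/
def IsDensity (ρ : Matrix m m ℂ) : Prop := ρ.PosSemidef ∧ ρ.trace = 1

/-- The trace norm `‖A‖₁ = Tr √(AᴴA)`. -/
def traceNorm (A : Matrix m m ℂ) : ℝ :=
  ((Matrix.posSemidef_conjTranspose_mul_self A).sqrt).trace.re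

/-- The trace distance `T(ρ,σ) = ‖ρ − σ‖₁ / 2`. -/
def traceDist (ρ σ : Matrix m m ℂ) : ℝ := traceNorm (ρ - σ) / 2

/-- The fidelity `F(ρ,σ) = ‖√ρ √σ‖₁`. -/
def fid {ρ σ : Matrix m m ℂ} (hρ : ρ.PosSemidef) (hσ : σ.PosSemidef) : ℝ :=
  traceNorm (hρ.sqrt * hσ.sqrt)

/-- The sign function applied to a Hermitian matrix via its spectral decomposition. -/
def signMat {A : Matrix m m ℂ} (hA : A.IsHermitian) : Matrix m m ℂ :=
  hA.cfc (fun x => Real.sign x)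

/-- The outer product `|ψ⟩⟨φ|`. -/
def outer (ψ φ : m → ℂ) : Matrix m m ℂ := Matrix.vecMulVec ψ (star φ)

variable {α β : Type*} [Fintype α] [DecidableEq α] [Fintype β] [DecidableEq β]

/-- Partial trace over the first (A) factor. -/
def ptraceA (M : Matrix (α × β) (α × β) ℂ) : Matrix β β ℂ :=
  Matrix.of fun r r' => ∑ a, M (a, r) (a, r')

/-- Partial trace over the second (R) factor. -/
def ptraceR (M : Matrix (α × β) (α × β) ℂ) : Matrix α α ℂ :=
  Matrix.of fun a a' => ∑ r, M (a, r) (a', r)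

open scoped MatrixOrder in
lemma Matrix.PosSemidef.sqrt_eq_cfc' {n : Type*} [Fintype n] [DecidableEq n] {A : Matrix n n ℂ}
    (hA : A.PosSemidef) : hA.sqrt = CFC.sqrt A := by
  rw [CFC.sqrt_eq_real_sqrt A hA.nonneg, cfcₙ_eq_cfc, hA.1.cfc_eq]
  simp [Matrix.PosSemidef.sqrt, IsHermitian.cfc, Unitary.conjStarAlgAut_apply, Function.comp_def]

open scoped MatrixOrder in
lemma Matrix.PosSemidef.posSemidef_sqrt {n : Type*} [Fintype n] [DecidableEq n] {A : Matrix n n ℂ}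
    (hA : A.PosSemidef) : hA.sqrt.PosSemidef := by
  rw [hA.sqrt_eq_cfc']; exact nonneg_iff_posSemidef.mp (CFC.sqrt_nonneg A)

open scoped MatrixOrder in
lemma Matrix.PosSemidef.sqrt_mul_self {n : Type*} [Fintype n] [DecidableEq n] {A : Matrix n n ℂ}
    (hA : A.PosSemidef) : hA.sqrt * hA.sqrt = A := by
  rw [hA.sqrt_eq_cfc']; exact CFC.sqrt_mul_sqrt_self A hA.nonneg

open scoped MatrixOrder in
lemma Matrix.PosSemidef.sq_sqrt {n : Type*} [Fintype n] [DecidableEq n] {A : Matrix n n ℂ}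
    (hA : A.PosSemidef) : hA.sqrt ^ 2 = A := by
  rw [hA.sqrt_eq_cfc']; exact CFC.sq_sqrt A hA.nonneg

open scoped MatrixOrder in
lemma Matrix.PosSemidef.eq_sqrt_of_sq_eq {n : Type*} [Fintype n] [DecidableEq n]
    {A B : Matrix n n ℂ} (hB : B.PosSemidef) (hA : A.PosSemidef) (h : B ^ 2 = A) :
    B = hA.sqrt := by
  rw [hA.sqrt_eq_cfc']; exact (CFC.sqrt_unique (by rw [← pow_two]; exact h) hB.nonneg).symm

section AuxLemmas
set_option linter.unusedSectionVars false
open Polynomial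
variable {n l : Type*} [Fintype n] [DecidableEq n] [Fintype l] [DecidableEq l]

private lemma mul_pow_comm' (B : Matrix n l ℂ) (k : ℕ) :
    B * (Bᴴ * B) ^ k = (B * Bᴴ) ^ k * B := by
  induction k with
  | zero => simp
  | succ k ih =>
    rw [pow_succ, pow_succ, ← Matrix.mul_assoc, ih]
    simp only [Matrix.mul_assoc]

private lemma mul_aeval_comm' (B : Matrix n l ℂ) (p : ℝ[X]) :
    B * aeval (Bᴴ * B) p = aeval (B * Bᴴ) p * B := by
  rw [aeval_eq_sum_range, aeval_eq_sum_range, Matrix.mul_sum, Matrix.sum_mul]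
  refine Finset.sum_congr rfl fun i _ => ?_
  rw [Matrix.mul_smul, Matrix.smul_mul, mul_pow_comm']

private lemma trace_aeval_comm' (B : Matrix n l ℂ) (p : ℝ[X]) (hp : p.coeff 0 = 0) :
    (aeval (Bᴴ * B) p).trace = (aeval (B * Bᴴ) p).trace := by
  have h := p.divX_mul_X_add
  rw [hp, map_zero, add_zero] at h
  have key : ∀ (q : ℝ[X]), (aeval (Bᴴ * B) (q * X)).trace = (aeval (B * Bᴴ) (q * X)).trace := by
    intro q
    rw [_root_.map_mul, _root_.map_mul, aeval_X, aeval_X]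
    calc (aeval (Bᴴ * B) q * (Bᴴ * B)).trace
        = ((aeval (Bᴴ * B) q * Bᴴ) * B).trace := by rw [Matrix.mul_assoc]
      _ = (B * (aeval (Bᴴ * B) q * Bᴴ)).trace := by rw [trace_mul_comm]
      _ = ((B * aeval (Bᴴ * B) q) * Bᴴ).trace := by rw [Matrix.mul_assoc]
      _ = ((aeval (B * Bᴴ) q * B) * Bᴴ).trace := by rw [mul_aeval_comm']
      _ = (aeval (B * Bᴴ) q * (B * Bᴴ)).trace := by rw [Matrix.mul_assoc]
  rw [← h]; exact key _

private lemma conj_pow' (U D : Matrix n n ℂ) (h1 : U * star U = 1) (h2 : star U * U = 1)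
    (k : ℕ) : (U * D * star U) ^ k = U * D ^ k * star U := by
  induction k with
  | zero => simp [h1]
  | succ k ih =>
    rw [pow_succ, pow_succ, ih]
    calc U * D ^ k * star U * (U * D * star U)
        = U * D ^ k * (star U * U) * D * star U := by simp only [Matrix.mul_assoc]
      _ = U * (D ^ k * D) * star U := by rw [h2]; simp only [Matrix.mul_one, Matrix.mul_assoc]

private lemma aeval_unitary_conj' (U D : Matrix n n ℂ) (h1 : U * star U = 1)
    (h2 : star U * U = 1) (p : ℝ[X]) :
    aeval (U * D * star U) p = U * aeval D p * star U := by
  rw [aeval_eq_sum_range, aeval_eq_sum_range, Matrix.mul_sum, Matrix.sum_mul]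
  refine Finset.sum_congr rfl fun i _ => ?_
  rw [conj_pow' U D h1 h2, Matrix.mul_smul, Matrix.smul_mul]

private lemma aeval_diagonal' (d : n → ℂ) (p : ℝ[X]) :
    aeval (Matrix.diagonal d) p = Matrix.diagonal fun i => aeval (d i) p := by
  ext i j
  by_cases h : i = j
  · subst h
    simp [aeval_eq_sum_range, Matrix.sum_apply, Matrix.diagonal_pow]
  · simp [aeval_eq_sum_range, Matrix.sum_apply, Matrix.diagonal_pow,
      Matrix.diagonal_apply_ne _ h]

private lemma sqrt_eq_aeval' {M : Matrix n n ℂ} (hM : M.PosSemidef) (p : ℝ[X])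
    (hp : ∀ i, p.eval (hM.1.eigenvalues i) = Real.sqrt (hM.1.eigenvalues i)) :
    hM.sqrt = aeval M p := by
  have h1 : (hM.1.eigenvectorUnitary : Matrix n n ℂ) * star (hM.1.eigenvectorUnitary : Matrix n n ℂ) = 1 :=
    Matrix.mem_unitaryGroup_iff.mp hM.1.eigenvectorUnitary.2
  have h2 : star (hM.1.eigenvectorUnitary : Matrix n n ℂ) * (hM.1.eigenvectorUnitary : Matrix n n ℂ) = 1 :=
    Matrix.mem_unitaryGroup_iff'.mp hM.1.eigenvectorUnitary.2
  conv_rhs => rw [hM.1.spectral_theorem, Unitary.conjStarAlgAut_apply]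
  rw [aeval_unitary_conj' _ _ h1 h2, aeval_diagonal', Matrix.PosSemidef.sqrt]
  have key : (RCLike.ofReal ∘ Real.sqrt ∘ hM.1.eigenvalues : n → ℂ)
      = fun i => aeval ((RCLike.ofReal ∘ hM.1.eigenvalues) i : ℂ) p := by
    funext i
    have h3 : ((RCLike.ofReal ∘ hM.1.eigenvalues) i : ℂ) = algebraMap ℝ ℂ (hM.1.eigenvalues i) := rfl
    rw [h3, aeval_algebraMap_apply]
    simp [← hp i, Polynomial.coe_aeval_eq_eval]
  rw [key]

private lemma sqrt_congr' {M N : Matrix n n ℂ} (h : M = N) (hM : M.PosSemidef)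
    (hN : N.PosSemidef) : hM.sqrt = hN.sqrt := by subst h; rfl

private lemma trace_sqrt_mul_comm' (B : Matrix n l ℂ) :
    ((Matrix.posSemidef_conjTranspose_mul_self B).sqrt).trace
      = ((Matrix.posSemidef_self_mul_conjTranspose B).sqrt).trace := by
  classical
  set h₁ := Matrix.posSemidef_conjTranspose_mul_self B with hh₁
  set h₂ := Matrix.posSemidef_self_mul_conjTranspose B with hh₂
  set s : Finset ℝ := (Finset.image h₁.1.eigenvalues Finset.univ ∪
      Finset.image h₂.1.eigenvalues Finset.univ) ∪ {0} with hs
  set p := Lagrange.interpolate s id Real.sqrt with hpdef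
  have hnode : ∀ x ∈ s, p.eval x = Real.sqrt x := fun x hx => by
    rw [hpdef]; simpa using Lagrange.eval_interpolate_at_node Real.sqrt (Set.injOn_id _) hx
  have h0 : p.coeff 0 = 0 := by
    rw [Polynomial.coeff_zero_eq_eval_zero,
      hnode 0 (Finset.mem_union_right _ (Finset.mem_singleton_self 0)), Real.sqrt_zero]
  rw [sqrt_eq_aeval' h₁ p (fun i => hnode _ (Finset.mem_union_left _ (Finset.mem_union_left _
        (Finset.mem_image_of_mem _ (Finset.mem_univ i))))),
    sqrt_eq_aeval' h₂ p (fun i => hnode _ (Finset.mem_union_left _ (Finset.mem_union_right _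
        (Finset.mem_image_of_mem _ (Finset.mem_univ i))))),
    trace_aeval_comm' B p h0]

private lemma tct' {k : Type*} (A : Matrix k l ℂ) : (Aᵀ)ᴴ = (Aᴴ)ᵀ := by
  ext i j; rfl

private lemma conj_mul' {k : Type*} [Fintype k] (A : Matrix n k ℂ) (C : Matrix k l ℂ) :
    ((A * C)ᴴ)ᵀ = (Aᴴ)ᵀ * (Cᴴ)ᵀ := by
  rw [Matrix.conjTranspose_mul, Matrix.transpose_mul]

private lemma trace_re_sqrt_conj' {M : Matrix n n ℂ} (hM : M.PosSemidef)
    (hMc : ((Mᴴ)ᵀ).PosSemidef) : (hMc.sqrt).trace.re = (hM.sqrt).trace.re := by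
  have hpsd : (((hM.sqrt)ᴴ)ᵀ).PosSemidef := by
    rw [hM.posSemidef_sqrt.1]
    exact hM.posSemidef_sqrt.transpose
  have hsq : (((hM.sqrt)ᴴ)ᵀ) ^ 2 = (Mᴴ)ᵀ := by
    rw [pow_two, ← conj_mul', ← pow_two, hM.sq_sqrt]
  have h := Matrix.PosSemidef.eq_sqrt_of_sq_eq hpsd hMc hsq
  rw [← h, Matrix.trace_transpose, Matrix.trace_conjTranspose]
  simp

end AuxLemmas

/-- `‖Tr_A(|ψ₀⟩⟨ψ₁|)‖₁ = F(ρ₀,ρ₁)` for purifications `ψ₀, ψ₁`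
of `ρ₀, ρ₁`. -/
theorem traceNorm_ptraceA_outer_eq_fid
    {ρ₀ ρ₁ : Matrix α α ℂ} (h₀ : IsDensity ρ₀) (h₁ : IsDensity ρ₁)
    (ψ₀ ψ₁ : α × β → ℂ)
    (hψ₀unit : star ψ₀ ⬝ᵥ ψ₀ = 1) (hψ₁unit : star ψ₁ ⬝ᵥ ψ₁ = 1)
    (hψ₀ : ptraceR (outer ψ₀ ψ₀) = ρ₀) (hψ₁ : ptraceR (outer ψ₁ ψ₁) = ρ₁) :
    traceNorm (ptraceA (outer ψ₀ ψ₁)) = fid h₀.1 h₁.1 := by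
  classical
  set A₀ : Matrix α β ℂ := Matrix.of fun a r => ψ₀ (a, r) with hA₀
  set A₁ : Matrix α β ℂ := Matrix.of fun a r => ψ₁ (a, r) with hA₁
  set S₀ : Matrix α α ℂ := (h₀.1).sqrt with hS₀
  set S₁ : Matrix α α ℂ := (h₁.1).sqrt with hS₁
  have hS₀h : S₀ᴴ = S₀ := (h₀.1).posSemidef_sqrt.1
  have hS₁h : S₁ᴴ = S₁ := (h₁.1).posSemidef_sqrt.1
  have hsq₀ : S₀ * S₀ = ρ₀ := (h₀.1).sqrt_mul_self
  have hsq₁ : S₁ * S₁ = ρ₁ := (h₁.1).sqrt_mul_self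
  have hρ₀ : A₀ * A₀ᴴ = ρ₀ := by
    rw [← hψ₀]; ext a a'
    simp [ptraceR, outer, Matrix.mul_apply, Matrix.vecMulVec_apply, hA₀]
  have hρ₁ : A₁ * A₁ᴴ = ρ₁ := by
    rw [← hψ₁]; ext a a'
    simp [ptraceR, outer, Matrix.mul_apply, Matrix.vecMulVec_apply, hA₁]
  have hX : ptraceA (outer ψ₀ ψ₁) = A₀ᵀ * (A₁ᴴ)ᵀ := by
    ext r r'
    simp [ptraceA, outer, Matrix.mul_apply, Matrix.vecMulVec_apply, hA₀, hA₁]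
  have hmid : S₀ᵀ * S₀ᵀ = (A₀ᴴ)ᵀ * A₀ᵀ := by
    rw [← Matrix.transpose_mul, ← Matrix.transpose_mul, hsq₀, hρ₀]
  have claimA : (A₀ᵀ * (A₁ᴴ)ᵀ)ᴴ * (A₀ᵀ * (A₁ᴴ)ᵀ)
      = (((S₀ * A₁)ᴴ)ᵀ)ᴴ * ((S₀ * A₁)ᴴ)ᵀ := by
    simp only [Matrix.conjTranspose_mul, Matrix.transpose_mul, tct',
      Matrix.conjTranspose_conjTranspose, hS₀h, Matrix.mul_assoc]
    rw [← Matrix.mul_assoc ((A₀ᴴ)ᵀ), ← Matrix.mul_assoc (S₀ᵀ), ← hmid]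
  have claimB : ((S₀ * A₁)ᴴ)ᵀ * (((S₀ * A₁)ᴴ)ᵀ)ᴴ
      = (((S₀ * A₁) * (S₀ * A₁)ᴴ)ᴴ)ᵀ := by
    conv_rhs => rw [conj_mul']
    simp only [tct', Matrix.conjTranspose_conjTranspose]
  have claimC : (S₀ * A₁) * (S₀ * A₁)ᴴ = (S₀ * S₁) * (S₀ * S₁)ᴴ := by
    simp only [Matrix.conjTranspose_mul, hS₀h, hS₁h, Matrix.mul_assoc]
    congr 1
    rw [← Matrix.mul_assoc, ← Matrix.mul_assoc, hρ₁, hsq₁]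
  have hconj : ((((S₀ * A₁) * (S₀ * A₁)ᴴ)ᴴ)ᵀ).PosSemidef := by
    rw [← claimB]
    exact Matrix.posSemidef_self_mul_conjTranspose _
  rw [hX]
  unfold traceNorm fid traceNorm
  calc ((Matrix.posSemidef_conjTranspose_mul_self (A₀ᵀ * (A₁ᴴ)ᵀ)).sqrt).trace.re
      = ((Matrix.posSemidef_self_mul_conjTranspose (((S₀ * A₁)ᴴ)ᵀ)).sqrt).trace.re := by
        rw [sqrt_congr' claimA _ (Matrix.posSemidef_conjTranspose_mul_self _),
          trace_sqrt_mul_comm']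
    _ = (hconj.sqrt).trace.re := by
        rw [sqrt_congr' claimB _ hconj]
    _ = ((Matrix.posSemidef_self_mul_conjTranspose (S₀ * A₁)).sqrt).trace.re :=
        trace_re_sqrt_conj' (Matrix.posSemidef_self_mul_conjTranspose (S₀ * A₁)) hconj
    _ = ((Matrix.posSemidef_self_mul_conjTranspose (S₀ * S₁)).sqrt).trace.re := by
        rw [sqrt_congr' claimC _ (Matrix.posSemidef_self_mul_conjTranspose _)]
    _ = ((Matrix.posSemidef_conjTranspose_mul_self (S₀ * S₁)).sqrt).trace.re := by
        rw [trace_sqrt_mul_comm']
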